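/- arXiv:2411.04618 — 6 statements merged into one kernel-verified Lean document; each statement's English description precedes it below -/
import Mathlib

section
/- Let L be a set of s non-negative integers and let F_1, ..., F_m be distinct subsets of [n] such that |F_i ∩ F_j| ∈ L for all i ≠ j. Then m ≤ ∑_{i=0}^{s} C(n, i). -/
open Finset

namespace FranklWilsonAux

variable {n : ℕ}

/-- Indicator of `I ⊆ A`, as a real-valued function on subsets of `Fin n`. -/
noncomputable def g (I : Finset (Fin n)) : Finset (Fin n) → ℝ :=
  fun A => if I ⊆ A then 1 else 0

/-- Span of the indicators `g I` with `I.card ≤ t`. -/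
noncomputable def Wt (n t : ℕ) : Submodule ℝ (Finset (Fin n) → ℝ) :=
  Submodule.span ℝ (g '' {I : Finset (Fin n) | I.card ≤ t})

lemma Wt_mono {t u : ℕ} (h : t ≤ u) : Wt n t ≤ Wt n u :=
  Submodule.span_mono (Set.image_mono fun _ hI => le_trans hI h)

lemma g_mem {I : Finset (Fin n)} {t : ℕ} (h : I.card ≤ t) : g I ∈ Wt n t :=
  Submodule.subset_span ⟨I, h, rfl⟩

lemma key_identity (S : Finset (Fin n)) (c : ℝ) (I : Finset (Fin n)) :
    (fun A => (((S ∩ A).card : ℝ) - c) * g I A)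
      = (∑ k ∈ S, g (insert k I)) - c • g I := by
  funext A
  by_cases hIA : I ⊆ A
  · have hins : ∀ k, insert k I ⊆ A ↔ k ∈ A := by
      intro k
      simp [Finset.insert_subset_iff, hIA]
    simp only [g, hIA, if_pos, mul_one, Finset.sum_apply, Pi.sub_apply, Pi.smul_apply,
      smul_eq_mul]
    have : (∑ k ∈ S, if insert k I ⊆ A then (1 : ℝ) else 0)
        = ∑ k ∈ S, if k ∈ A then (1 : ℝ) else 0 := by
      apply Finset.sum_congr rfl
      intro k _
      simp [hins k]
    rw [this, Finset.sum_boole, Finset.filter_mem_eq_inter]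
  · have hins : ∀ k, ¬ insert k I ⊆ A := by
      intro k hk
      exact hIA (Finset.Subset.trans (Finset.subset_insert k I) hk)
    simp [g, hIA, hins]

lemma mul_mem (S : Finset (Fin n)) (c : ℝ) (t : ℕ)
    {h : Finset (Fin n) → ℝ} (hh : h ∈ Wt n t) :
    (fun A => (((S ∩ A).card : ℝ) - c) * h A) ∈ Wt n (t + 1) := by
  set φ : Finset (Fin n) → ℝ := fun A => ((S ∩ A).card : ℝ) - c with hφ
  have : Wt n t ≤ (Wt n (t + 1)).comap (LinearMap.mulLeft ℝ φ) := by
    rw [Wt, Submodule.span_le]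
    rintro _ ⟨I, hI, rfl⟩
    simp only [Set.mem_setOf_eq] at hI
    simp only [SetLike.mem_coe, Submodule.mem_comap, LinearMap.mulLeft_apply]
    have heq : φ * g I = (∑ k ∈ S, g (insert k I)) - c • g I := by
      have := key_identity S c I
      funext A
      have := congrFun this A
      simpa [hφ] using this
    rw [heq]
    refine Submodule.sub_mem _ (Submodule.sum_mem _ fun k _ => ?_)
      (Submodule.smul_mem _ _ (g_mem (le_trans hI (Nat.le_succ t))))
    exact g_mem (le_trans (Finset.card_insert_le k I) (Nat.succ_le_succ hI))
  have := this hh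
  simpa [Submodule.mem_comap, LinearMap.mulLeft_apply, hφ, Pi.mul_def] using this

lemma prod_mem (S : Finset (Fin n)) (T : Finset ℕ) :
    (fun A => ∏ l ∈ T, (((S ∩ A).card : ℝ) - (l : ℝ))) ∈ Wt n T.card := by
  induction T using Finset.induction_on with
  | empty =>
      have : (fun _ : Finset (Fin n) => (1 : ℝ)) = g (∅ : Finset (Fin n)) := by
        funext A; simp [g]
      simpa [this] using g_mem (t := 0) (I := (∅ : Finset (Fin n))) le_rfl
  | insert _ _ hx ih =>
      rename_i a T'
      rw [Finset.card_insert_of_notMem hx]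
      have := mul_mem S (a : ℝ) T'.card ih
      simpa [Finset.prod_insert hx] using this

end FranklWilsonAux

open FranklWilsonAux in
/-- Frankl–Wilson theorem: if `L` is a set of `s` non-negative integers and
`F 0, …, F (m-1)` are distinct subsets of `[n]` with `|F i ∩ F j| ∈ L` for all
`i ≠ j`, then `m ≤ ∑_{i=0}^{s} C(n, i)`. -/
theorem frankl_wilson (n s m : ℕ) (L : Finset ℕ) (hL : L.card = s)
    (F : Fin m → Finset (Fin n)) (hinj : Function.Injective F)
    (hint : ∀ i j : Fin m, i ≠ j → (F i ∩ F j).card ∈ L) :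
    m ≤ ∑ i ∈ Finset.range (s + 1), n.choose i := by
  classical
  -- the polynomial functions
  set f : Fin m → (Finset (Fin n) → ℝ) :=
    fun i A => ∏ l ∈ L.filter (· < (F i).card), (((F i ∩ A).card : ℝ) - (l : ℝ)) with hf
  -- each f i lies in Wt n s
  have hfW : ∀ i, f i ∈ Wt n s := by
    intro i
    have h1 := prod_mem (F i) (L.filter (· < (F i).card))
    have h2 : (L.filter (· < (F i).card)).card ≤ s := by
      rw [← hL]; exact Finset.card_filter_le _ _
    exact Wt_mono h2 h1
  -- off-diagonal vanishing
  have hzero : ∀ i j : Fin m, i ≠ j → (F i).card ≤ (F j).card → f j (F i) = 0 := by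
    intro i j hij hcard
    apply Finset.prod_eq_zero (i := (F j ∩ F i).card)
    · rw [Finset.mem_filter]
      refine ⟨hint j i (Ne.symm hij), ?_⟩
      by_contra hlt
      push_neg at hlt
      have hsub : F j ∩ F i = F j :=
        Finset.eq_of_subset_of_card_le (Finset.inter_subset_left) hlt
      have hji : F j ⊆ F i := Finset.inter_eq_left.mp hsub
      have : F j = F i := Finset.eq_of_subset_of_card_le hji hcard
      exact hij (hinj this.symm)
    · simp
  -- nonvanishing on the diagonal
  have hdiag : ∀ i : Fin m, f i (F i) ≠ 0 := by
    intro i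
    have : (0 : ℝ) < ∏ l ∈ L.filter (· < (F i).card),
        (((F i ∩ F i).card : ℝ) - (l : ℝ)) := by
      apply Finset.prod_pos
      intro l hl
      rw [Finset.mem_filter] at hl
      rw [Finset.inter_self]
      have : (l : ℝ) < ((F i).card : ℝ) := by exact_mod_cast hl.2
      linarith
    exact ne_of_gt this
  -- linear independence
  have li : LinearIndependent ℝ f := by
    rw [Fintype.linearIndependent_iff]
    intro c hc
    by_contra hne
    push_neg at hne
    obtain ⟨i1, hi1⟩ := hne
    set supp : Finset (Fin m) := Finset.univ.filter (fun i => c i ≠ 0) with hsupp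
    have hne' : supp.Nonempty := ⟨i1, by simp [hsupp, hi1]⟩
    obtain ⟨i0, hi0, hmin⟩ :=
      Finset.exists_min_image supp (fun i => (F i).card * m + i.val) hne'
    have hcard : ∀ j ∈ supp, j ≠ i0 → (F i0).card ≤ (F j).card := by
      intro j hj _
      by_contra hlt
      push_neg at hlt
      have h1 := hmin j hj
      have h2 : (F j).card * m + j.val < (F i0).card * m + i0.val := by
        calc (F j).card * m + j.val < (F j).card * m + m := by
              exact Nat.add_lt_add_left j.isLt _
          _ = ((F j).card + 1) * m := by ring
          _ ≤ (F i0).card * m := Nat.mul_le_mul_right m hlt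
          _ ≤ (F i0).card * m + i0.val := Nat.le_add_right _ _
      omega
    have heval := congrFun hc (F i0)
    rw [Finset.sum_apply] at heval
    have hsum : ∀ j ∈ Finset.univ, j ≠ i0 → (c j • f j) (F i0) = 0 := by
      intro j _ hj
      by_cases hcj : c j = 0
      · simp [hcj]
      · have hjs : j ∈ supp := by simp [hsupp, hcj]
        have := hzero i0 j (Ne.symm hj) (hcard j hjs hj)
        simp [this]
    rw [Finset.sum_eq_single i0 hsum (fun h => absurd (Finset.mem_univ i0) h)] at heval
    have : c i0 = 0 := by
      have := hdiag i0
      simp only [Pi.smul_apply, smul_eq_mul] at heval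
      exact (mul_eq_zero.mp heval).resolve_right this
    rw [Finset.mem_filter] at hi0
    exact hi0.2 this
  -- dimension count
  have hm : m = Module.finrank ℝ (Submodule.span ℝ (Set.range f)) := by
    rw [finrank_span_eq_card li, Fintype.card_fin]
  have hle1 : Submodule.span ℝ (Set.range f) ≤ Wt n s := by
    rw [Submodule.span_le]
    rintro _ ⟨i, rfl⟩
    exact hfW i
  set TI : Finset (Finset (Fin n)) := Finset.univ.filter (fun I => I.card ≤ s) with hTI
  have hWeq : Wt n s = Submodule.span ℝ ((TI.image g : Finset (Finset (Fin n) → ℝ)) : Set _) := by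
    rw [Wt]
    congr 1
    ext x
    simp [hTI, Set.mem_image, eq_comm]
  have hfrW : Module.finrank ℝ (Wt n s) ≤ TI.card := by
    rw [hWeq]
    exact le_trans (finrank_span_finset_le_card _) (Finset.card_image_le)
  have hTIcard : TI.card = ∑ i ∈ Finset.range (s + 1), n.choose i := by
    have hbi : TI = (Finset.range (s + 1)).biUnion
        (fun k => Finset.univ.powersetCard k) := by
      ext I
      simp only [hTI, Finset.mem_filter, Finset.mem_univ, true_and, Finset.mem_biUnion,
        Finset.mem_range, Finset.mem_powersetCard, Nat.lt_succ_iff]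
      constructor
      · intro h; exact ⟨I.card, h, Finset.subset_univ I, rfl⟩
      · rintro ⟨k, hk, -, rfl⟩; exact hk
    rw [hbi, Finset.card_biUnion]
    · apply Finset.sum_congr rfl
      intro k _
      rw [Finset.card_powersetCard, Finset.card_univ, Fintype.card_fin]
    · intro a _ b _ hab
      rw [Function.onFun, Finset.disjoint_left]
      intro I hIa hIb
      rw [Finset.mem_powersetCard] at hIa hIb
      exact hab (hIa.2 ▸ hIb.2)
  calc m = Module.finrank ℝ (Submodule.span ℝ (Set.range f)) := hm
    _ ≤ Module.finrank ℝ (Wt n s) := Submodule.finrank_mono hle1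
    _ ≤ TI.card := hfrW
    _ = ∑ i ∈ Finset.range (s + 1), n.choose i := hTIcard
end

section
/- Let L be a set of s non-negative integers and let F = {F_1, ..., F_m} be an ordered L-intersecting family of subsets of [n]. Then m ≤ ∑_{i=0}^{s} C(n-1, i). -/
open Finset

namespace OLI

variable {n : ℕ}

/-- monomial function: indicator that `S ⊆ T`. -/
def mon (S T : Finset (Fin n)) : ℚ := if S ⊆ T then 1 else 0

/-- span of monomials supported in `G` of degree ≤ `d`. -/
def spanD (G : Finset (Fin n)) (d : ℕ) : Submodule ℚ (Finset (Fin n) → ℚ) :=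
  Submodule.span ℚ {f | ∃ S : Finset (Fin n), S ⊆ G ∧ S.card ≤ d ∧ f = mon S}

lemma spanD_mono (G : Finset (Fin n)) {d d' : ℕ} (h : d ≤ d') : spanD G d ≤ spanD G d' :=
  Submodule.span_mono (fun f ⟨S, h1, h2, h3⟩ => ⟨S, h1, h2.trans h, h3⟩)

lemma mul_affine_mem {G A : Finset (Fin n)} (hA : A ⊆ G) (β : ℚ) {d : ℕ}
    {f : Finset (Fin n) → ℚ} (hf : f ∈ spanD G d) :
    (fun T => (((T ∩ A).card : ℚ) + β) * f T) ∈ spanD G (d + 1) := by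
  induction hf using Submodule.span_induction with
  | mem x hx =>
    obtain ⟨S, hSG, hScard, rfl⟩ := hx
    have key : (fun T => (((T ∩ A).card : ℚ) + β) * mon S T)
        = (∑ a ∈ A, mon (insert a S)) + β • mon S := by
      funext T
      simp only [Finset.sum_apply, Pi.add_apply, Pi.smul_apply, smul_eq_mul, mon]
      by_cases hS : S ⊆ T
      · simp only [hS, if_true, mul_one, Finset.insert_subset_iff, and_true,
          Finset.sum_boole, Finset.filter_mem_eq_inter]
        rw [Finset.inter_comm]
      · have h0 : ∀ a ∈ A, ¬ insert a S ⊆ T := fun a _ h => hS ((Finset.subset_insert a S).trans h)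
        rw [if_neg hS, Finset.sum_congr rfl (fun a ha => if_neg (h0 a ha))]
        simp
    rw [key]
    refine Submodule.add_mem _ (Submodule.sum_mem _ fun a ha => ?_) (Submodule.smul_mem _ _ ?_)
    · exact Submodule.subset_span ⟨insert a S, Finset.insert_subset (hA ha) hSG,
        (Finset.card_insert_le a S).trans (by omega), rfl⟩
    · exact Submodule.subset_span ⟨S, hSG, hScard.trans (Nat.le_succ d), rfl⟩
  | zero =>
    have : (fun T => (((T ∩ A).card : ℚ) + β) * (0 : Finset (Fin n) → ℚ) T) = 0 := by
      funext T; simp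
    rw [this]; exact Submodule.zero_mem _
  | add x y hx hy ihx ihy =>
    have : (fun T => (((T ∩ A).card : ℚ) + β) * (x + y) T)
        = (fun T => (((T ∩ A).card : ℚ) + β) * x T) + (fun T => (((T ∩ A).card : ℚ) + β) * y T) := by
      funext T; simp [mul_add]
    rw [this]; exact Submodule.add_mem _ ihx ihy
  | smul a x hx ihx =>
    have : (fun T => (((T ∩ A).card : ℚ) + β) * (a • x) T)
        = a • fun T => (((T ∩ A).card : ℚ) + β) * x T := by
      funext T; simp [Pi.smul_apply, smul_eq_mul]; ring
    rw [this]; exact Submodule.smul_mem _ _ ihx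

lemma prod_mem {G A : Finset (Fin n)} (hA : A ⊆ G) (L' : Finset ℕ) (b : ℕ → ℚ) :
    (fun T => ∏ l ∈ L', (((T ∩ A).card : ℚ) + b l)) ∈ spanD G L'.card := by
  induction L' using Finset.induction with
  | empty =>
    have h1 : (fun T : Finset (Fin n) => ∏ l ∈ (∅ : Finset ℕ), (((T ∩ A).card : ℚ) + b l))
        = mon (∅ : Finset (Fin n)) := by
      funext T; simp [mon]
    rw [h1]
    exact Submodule.subset_span ⟨(∅ : Finset (Fin n)), Finset.empty_subset _, by simp, rfl⟩
  | @insert a L' ha ih =>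
    have hcard : (insert a L').card = L'.card + 1 := Finset.card_insert_of_notMem ha
    have : (fun T => ∏ l ∈ insert a L', (((T ∩ A).card : ℚ) + b l))
        = fun T => (((T ∩ A).card : ℚ) + b a) * ∏ l ∈ L', (((T ∩ A).card : ℚ) + b l) := by
      funext T; rw [Finset.prod_insert ha]
    rw [this, hcard]
    exact mul_affine_mem hA (b a) ih

lemma li_of_triangular {α : Type*} {m : ℕ} (v : Fin m → α → ℚ) (t : Fin m → α)
    (hdiag : ∀ i, v i (t i) ≠ 0) (hzero : ∀ i j : Fin m, j < i → v i (t j) = 0) :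
    LinearIndependent ℚ v := by
  rw [linearIndependent_iff']
  intro s g hsum
  have key : ∀ k : ℕ, ∀ i : Fin m, (i : ℕ) = k → i ∈ s → g i = 0 := by
    intro k
    induction k using Nat.strong_induction_on with
    | _ k ih =>
      intro i hik his
      have heval : ∑ j ∈ s, g j * v j (t i) = 0 := by
        have := congrFun hsum (t i)
        simpa [Finset.sum_apply] using this
      have hone : ∑ j ∈ s, g j * v j (t i) = g i * v i (t i) := by
        refine Finset.sum_eq_single i (fun j hjs hji => ?_) (fun h => absurd his h)
        rcases lt_or_gt_of_ne hji with h | h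
        · rw [ih (j : ℕ) (by omega) j rfl hjs, zero_mul]
        · rw [hzero j i h, mul_zero]
      rw [hone] at heval
      exact (mul_eq_zero.mp heval).resolve_right (hdiag i)
  exact fun i his => key i i rfl his

theorem ordered_L_intersecting_bound (n s m : ℕ) (hn : 0 < n)
    (L : Finset ℕ) (hL : L.card = s)
    (F : Fin m → Finset (Fin n)) (hinj : Function.Injective F)
    (hint : ∀ i j : Fin m, i ≠ j → (F i ∩ F j).card ∈ L)
    (hordered : ∃ r : ℕ, r ≤ m ∧
      (∀ i : Fin m, (i : ℕ) < r → (⟨n - 1, Nat.sub_lt hn one_pos⟩ : Fin n) ∈ F i) ∧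
      (∀ i : Fin m, r ≤ (i : ℕ) → (⟨n - 1, Nat.sub_lt hn one_pos⟩ : Fin n) ∉ F i) ∧
      (∀ i j : Fin m, i ≤ j → (F i).card ≤ (F j).card)) :
    m ≤ ∑ i ∈ Finset.range (s + 1), (n - 1).choose i := by
  classical
  obtain ⟨r, hrm, h1, h2, h3⟩ := hordered
  set e : Fin n := ⟨n - 1, Nat.sub_lt hn one_pos⟩ with he_def
  set G : Finset (Fin n) := Finset.univ.erase e with hG_def
  set A : Fin m → Finset (Fin n) := fun i => (F i).erase e with hA_def
  set c : Fin m → ℚ := fun i => if e ∈ F i then 1 else 0 with hc_def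
  set Li : Fin m → Finset ℕ := fun i => L.filter (· < (F i).card) with hLi_def
  set g : Fin m → Finset (Fin n) → ℚ :=
    fun i T => ∏ l ∈ Li i, (((T ∩ A i).card : ℚ) + (c i - (l : ℚ))) with hg_def
  set t : Fin m → Finset (Fin n) := fun j => (F j).erase e with ht_def
  have hAG : ∀ i, A i ⊆ G := fun i => Finset.erase_subset_erase e (Finset.subset_univ _)
  -- membership in the span of low-degree monomials
  have hmem : ∀ i, g i ∈ spanD G s := by
    intro i
    have := prod_mem (hAG i) (Li i) (fun l => c i - (l : ℚ))
    exact spanD_mono G (by rw [← hL]; exact Finset.card_filter_le _ _) this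
  -- key intersection computations
  have hti : ∀ i j : Fin m, t j ∩ A i = (F j ∩ F i).erase e := by
    intro i j
    ext x; simp only [ht_def, hA_def, Finset.mem_inter, Finset.mem_erase]; tauto
  -- e ∈ F i → i < r
  have heFr : ∀ i : Fin m, e ∈ F i → (i : ℕ) < r := by
    intro i hei
    by_contra h
    exact h2 i (le_of_not_gt h) hei
  -- diagonal values
  have hdiag : ∀ i, g i (t i) ≠ 0 := by
    intro i
    have hval : ((t i ∩ A i).card : ℚ) + c i = ((F i).card : ℚ) := by
      rw [hti i i, Finset.inter_self]
      by_cases hei : e ∈ F i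
      · rw [Finset.card_erase_of_mem hei]
        have h1le : 1 ≤ (F i).card := Finset.card_pos.mpr ⟨e, hei⟩
        rw [Nat.cast_sub h1le]
        simp [hc_def, hei]
      · rw [Finset.erase_eq_of_notMem hei]
        simp [hc_def, hei]
    rw [hg_def]
    simp only []
    rw [Finset.prod_ne_zero_iff]
    intro l hl
    have hlt : l < (F i).card := (Finset.mem_filter.mp hl).2
    have : ((t i ∩ A i).card : ℚ) + (c i - (l : ℚ)) = ((F i).card : ℚ) - l := by
      rw [← hval]; ring
    rw [this]
    have : (l : ℚ) < ((F i).card : ℚ) := by exact_mod_cast hlt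
    exact sub_ne_zero.mpr (ne_of_gt this)
  -- off-diagonal zeros
  have hzero : ∀ i j : Fin m, j < i → g i (t j) = 0 := by
    intro i j hji
    have hij : i ≠ j := fun h => absurd h.symm (ne_of_lt hji)
    set w : ℕ := (F i ∩ F j).card with hw_def
    have hwL : w ∈ L := hint i j hij
    have hwlt : w < (F i).card := by
      have hle1 : w ≤ (F j).card := Finset.card_le_card (Finset.inter_subset_right)
      have hle2 : (F j).card ≤ (F i).card := h3 j i (le_of_lt hji)
      rcases lt_or_eq_of_le (hle1.trans hle2) with h | h
      · exact h
      · exfalso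
        have hji' : (F j).card ≤ w := by omega
        have : F i ∩ F j = F j := Finset.eq_of_subset_of_card_le Finset.inter_subset_right hji'
        have hsub : F j ⊆ F i := by rw [← this]; exact Finset.inter_subset_left
        have : F j = F i := Finset.eq_of_subset_of_card_le hsub (by omega)
        exact (ne_of_lt hji) (hinj this)
    have hwLi : w ∈ Li i := Finset.mem_filter.mpr ⟨hwL, hwlt⟩
    -- the factor at l = w vanishes
    have hfac : ((t j ∩ A i).card : ℚ) + (c i - (w : ℚ)) = 0 := by
      rw [hti i j]
      by_cases hei : e ∈ F i
      · have hej : e ∈ F j := h1 j (lt_trans (Fin.lt_def.mp hji) (heFr i hei))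
        have heij : e ∈ F j ∩ F i := Finset.mem_inter.mpr ⟨hej, hei⟩
        rw [Finset.card_erase_of_mem heij]
        have h1le : 1 ≤ (F j ∩ F i).card := Finset.card_pos.mpr ⟨e, heij⟩
        rw [Nat.cast_sub h1le, Finset.inter_comm (F j) (F i), ← hw_def]
        simp [hc_def, hei]
      · have heij : e ∉ F j ∩ F i := fun h => hei (Finset.mem_inter.mp h).2
        rw [Finset.erase_eq_of_notMem heij, Finset.inter_comm (F j) (F i), ← hw_def]
        simp [hc_def, hei]
    exact Finset.prod_eq_zero hwLi hfac
  -- linear independence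
  have hli : LinearIndependent ℚ g := li_of_triangular g t hdiag hzero
  -- the span is generated by a finite set of monomials
  set B : Finset (Finset (Fin n)) := G.powerset.filter (fun S => S.card ≤ s) with hB_def
  have hset : {f | ∃ S : Finset (Fin n), S ⊆ G ∧ S.card ≤ s ∧ f = mon S}
      = (↑(B.image mon) : Set (Finset (Fin n) → ℚ)) := by
    ext f
    simp only [Set.mem_setOf_eq, Finset.coe_image, Set.mem_image, Finset.mem_coe,
      hB_def, Finset.mem_filter, Finset.mem_powerset]
    constructor
    · rintro ⟨S, hSG, hSc, rfl⟩; exact ⟨S, ⟨hSG, hSc⟩, rfl⟩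
    · rintro ⟨S, ⟨hSG, hSc⟩, rfl⟩; exact ⟨S, hSG, hSc, rfl⟩
  have hW_eq : spanD G s = Submodule.span ℚ (↑(B.image mon) : Set (Finset (Fin n) → ℚ)) := by
    unfold spanD; rw [hset]
  have hfd : FiniteDimensional ℚ (spanD G s) := by
    rw [hW_eq]; exact FiniteDimensional.span_finset ℚ _
  -- restrict the family into the span
  set g' : Fin m → (spanD G s) := fun i => ⟨g i, hmem i⟩ with hg'_def
  have hli' : LinearIndependent ℚ g' := by
    apply LinearIndependent.of_comp (spanD G s).subtype
    exact hli
  have hcard1 : m ≤ Module.finrank ℚ (spanD G s) := by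
    have := hli'.fintype_card_le_finrank
    simpa using this
  have hcard2 : Module.finrank ℚ (spanD G s) ≤ B.card := by
    rw [hW_eq]
    calc Module.finrank ℚ (Submodule.span ℚ (↑(B.image mon) : Set (Finset (Fin n) → ℚ)))
        ≤ (B.image mon).card := finrank_span_finset_le_card _
      _ ≤ B.card := Finset.card_image_le
  -- count B
  have hGcard : G.card = n - 1 := by
    rw [hG_def, Finset.card_erase_of_mem (Finset.mem_univ e), Finset.card_univ, Fintype.card_fin]
  have hBcard : B.card = ∑ i ∈ Finset.range (s + 1), (n - 1).choose i := by
    have hBU : B = (Finset.range (s + 1)).biUnion (fun k => G.powersetCard k) := by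
      ext S
      simp only [hB_def, Finset.mem_filter, Finset.mem_powerset, Finset.mem_biUnion,
        Finset.mem_range, Finset.mem_powersetCard, Nat.lt_succ_iff]
      constructor
      · rintro ⟨hSG, hSc⟩; exact ⟨S.card, hSc, hSG, rfl⟩
      · rintro ⟨k, hk, hSG, rfl⟩; exact ⟨hSG, hk⟩
    rw [hBU, Finset.card_biUnion (fun x _ y _ hxy => Finset.pairwise_disjoint_powersetCard G hxy)]
    refine Finset.sum_congr rfl (fun k _ => ?_)
    rw [Finset.card_powersetCard, hGcard]
  omega

end OLI

/-- Main theorem: an ordered `L`-intersecting family of subsets of `[n]`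
has size at most `∑_{i=0}^{s} C(n-1, i)`.  Here the element `n` of `[n]` is
modelled by the last element `⟨n-1, _⟩` of `Fin n`. -/
theorem ordered_L_intersecting_bound (n s m : ℕ) (hn : 0 < n)
    (L : Finset ℕ) (hL : L.card = s)
    (F : Fin m → Finset (Fin n)) (hinj : Function.Injective F)
    (hint : ∀ i j : Fin m, i ≠ j → (F i ∩ F j).card ∈ L)
    (hordered : ∃ r : ℕ, r ≤ m ∧
      (∀ i : Fin m, (i : ℕ) < r → (⟨n - 1, Nat.sub_lt hn one_pos⟩ : Fin n) ∈ F i) ∧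
      (∀ i : Fin m, r ≤ (i : ℕ) → (⟨n - 1, Nat.sub_lt hn one_pos⟩ : Fin n) ∉ F i) ∧
      (∀ i j : Fin m, i ≤ j → (F i).card ≤ (F j).card)) :
    m ≤ ∑ i ∈ Finset.range (s + 1), (n - 1).choose i :=
  OLI.ordered_L_intersecting_bound n s m hn L hL F hinj hint hordered
end

section
/- The family F = {A ⊆ [n] : n ∉ A, |A| ≤ s} is an ordered L-intersecting family for L = {0, 1, ..., s-1}, and |F| = ∑_{i=0}^{s} C(n-1, i). -/
/-- The family `F = {A ⊆ [n] : n ∉ A, |A| ≤ s}` is an ordered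
`{0,…,s-1}`-intersecting family, and `|F| = ∑_{i=0}^{s} C(n-1, i)`.
The element `n` of `[n]` is modelled by `⟨n-1, _⟩ : Fin n`. -/
theorem sharpness_example_one (n s : ℕ) (hn : 0 < n) :
    let last : Fin n := ⟨n - 1, Nat.sub_lt hn one_pos⟩
    let 𝓕 : Finset (Finset (Fin n)) :=
      Finset.univ.filter (fun A => last ∉ A ∧ A.card ≤ s)
    (∀ A ∈ 𝓕, ∀ B ∈ 𝓕, A ≠ B → (A ∩ B).card ∈ Finset.range s) ∧
    (∃ (F : Fin 𝓕.card → Finset (Fin n)), Function.Injective F ∧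
      (∀ A, A ∈ 𝓕 ↔ ∃ i, F i = A) ∧
      ∃ r : ℕ, r ≤ 𝓕.card ∧
        (∀ i : Fin 𝓕.card, (i : ℕ) < r → last ∈ F i) ∧
        (∀ i : Fin 𝓕.card, r ≤ (i : ℕ) → last ∉ F i) ∧
        (∀ i j : Fin 𝓕.card, i ≤ j → (F i).card ≤ (F j).card)) ∧
    𝓕.card = ∑ i ∈ Finset.range (s + 1), (n - 1).choose i := by
  intro last 𝓕
  refine ⟨?_, ?_, ?_⟩
  · intro A hA B hB hAB
    simp only [𝓕, Finset.mem_filter, Finset.mem_univ, true_and] at hA hB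
    rw [Finset.mem_range]
    by_contra h
    push_neg at h
    have hAi : (A ∩ B).card ≤ A.card := Finset.card_le_card (Finset.inter_subset_left)
    have hBi : (A ∩ B).card ≤ B.card := Finset.card_le_card (Finset.inter_subset_right)
    have hA' : A.card = s := le_antisymm hA.2 (le_trans h hAi)
    have hB' : B.card = s := le_antisymm hB.2 (le_trans h hBi)
    have h1 : A ∩ B = A := Finset.eq_of_subset_of_card_le Finset.inter_subset_left
      (by omega)
    have h2 : A ∩ B = B := Finset.eq_of_subset_of_card_le Finset.inter_subset_right
      (by omega)
    exact hAB (h1 ▸ h2)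
  · classical
    let e : Fin 𝓕.card ≃ 𝓕 := 𝓕.equivFin.symm
    let σ := Tuple.sort (fun i => ((e i : Finset (Fin n))).card)
    refine ⟨fun i => (e (σ i) : Finset (Fin n)), ?_, ?_, 0, Nat.zero_le _, ?_, ?_, ?_⟩
    · intro i j h
      have := Subtype.coe_injective h
      exact σ.injective (e.injective this)
    · intro A
      constructor
      · intro hA
        refine ⟨σ.symm (e.symm ⟨A, hA⟩), ?_⟩
        simp
      · rintro ⟨i, rfl⟩
        exact (e (σ i)).2
    · intro i hi; omega
    · intro i _
      have := (e (σ i)).2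
      simp only [𝓕, Finset.mem_filter] at this
      exact this.2.1
    · intro i j hij
      exact Tuple.monotone_sort (fun i => ((e i : Finset (Fin n))).card) hij
  · have key : 𝓕 = (Finset.range (s + 1)).biUnion
        (fun i => (Finset.univ.erase last).powersetCard i) := by
      ext A
      simp only [𝓕, Finset.mem_filter, Finset.mem_univ, true_and, Finset.mem_biUnion,
        Finset.mem_range, Finset.mem_powersetCard]
      constructor
      · rintro ⟨h1, h2⟩
        exact ⟨A.card, by omega, fun x hx => Finset.mem_erase.2 ⟨fun h => h1 (h ▸ hx),
          Finset.mem_univ x⟩, rfl⟩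
      · rintro ⟨i, hi, hsub, rfl⟩
        exact ⟨fun h => (Finset.mem_erase.1 (hsub h)).1 rfl, by omega⟩
    rw [key, Finset.card_biUnion]
    · have hc : (Finset.univ.erase last).card = n - 1 := by
        rw [Finset.card_erase_of_mem (Finset.mem_univ _), Finset.card_univ, Fintype.card_fin]
      exact Finset.sum_congr rfl fun i _ => by rw [Finset.card_powersetCard, hc]
    · intro i _ j _ hij
      apply Finset.disjoint_left.2
      intro A hA hA'
      rw [Finset.mem_powersetCard] at hA hA'
      exact hij (hA.2 ▸ hA'.2)
end

section
/- The family G = {G ⊆ [n] : n ∈ G, |G| ≤ s} ∪ {T ⊆ [n] : n ∉ T, |T| = s} is an ordered L-intersecting family for L = {0, 1, ..., s-1}, and |G| = ∑_{i=0}^{s} C(n-1, i). -/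
/-- The family `G = {G ⊆ [n] : n ∈ G, |G| ≤ s} ∪ {T ⊆ [n] : n ∉ T, |T| = s}`
is an ordered `{0,…,s-1}`-intersecting family, and
`|G| = ∑_{i=0}^{s} C(n-1, i)`.  The element `n` of `[n]` is modelled by
`⟨n-1, _⟩ : Fin n`. -/
theorem sharpness_example_two (n s : ℕ) (hn : 0 < n) :
    let last : Fin n := ⟨n - 1, Nat.sub_lt hn one_pos⟩
    let 𝓖 : Finset (Finset (Fin n)) :=
      Finset.univ.filter (fun A => (last ∈ A ∧ A.card ≤ s) ∨ (last ∉ A ∧ A.card = s))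
    (∀ A ∈ 𝓖, ∀ B ∈ 𝓖, A ≠ B → (A ∩ B).card ∈ Finset.range s) ∧
    (∃ (F : Fin 𝓖.card → Finset (Fin n)), Function.Injective F ∧
      (∀ A, A ∈ 𝓖 ↔ ∃ i, F i = A) ∧
      ∃ r : ℕ, r ≤ 𝓖.card ∧
        (∀ i : Fin 𝓖.card, (i : ℕ) < r → last ∈ F i) ∧
        (∀ i : Fin 𝓖.card, r ≤ (i : ℕ) → last ∉ F i) ∧
        (∀ i j : Fin 𝓖.card, i ≤ j → (F i).card ≤ (F j).card)) ∧
    𝓖.card = ∑ i ∈ Finset.range (s + 1), (n - 1).choose i := by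
  intro last 𝓖
  classical
  have hmem : ∀ A : Finset (Fin n),
      A ∈ 𝓖 ↔ (last ∈ A ∧ A.card ≤ s) ∨ (last ∉ A ∧ A.card = s) := by
    intro A; simp [𝓖]
  have hcard_le : ∀ A ∈ 𝓖, A.card ≤ s := by
    intro A hA; rcases (hmem A).1 hA with ⟨_, h⟩ | ⟨_, h⟩ <;> omega
  refine ⟨?_, ?_, ?_⟩
  · -- intersecting
    intro A hA B hB hAB
    rw [Finset.mem_range]
    by_contra h
    push_neg at h
    have h1 : (A ∩ B).card ≤ A.card := Finset.card_le_card Finset.inter_subset_left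
    have h2 : (A ∩ B).card ≤ B.card := Finset.card_le_card Finset.inter_subset_right
    have hA' : A ∩ B = A :=
      Finset.eq_of_subset_of_card_le Finset.inter_subset_left (le_trans (hcard_le A hA) h)
    have hB' : A ∩ B = B :=
      Finset.eq_of_subset_of_card_le Finset.inter_subset_right (le_trans (hcard_le B hB) h)
    exact hAB (hA'.symm.trans hB')
  · -- ordered enumeration
    set key : Finset (Fin n) → ℕ := fun A => 2 * A.card + (if last ∈ A then 0 else 1) with hkey
    have htrans : ∀ (a b c : Finset (Fin n)),
        decide (key a ≤ key b) → decide (key b ≤ key c) → decide (key a ≤ key c) := by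
      intro a b c h1 h2
      simp only [decide_eq_true_eq] at *
      omega
    have htotal : ∀ (a b : Finset (Fin n)),
        decide (key a ≤ key b) || decide (key b ≤ key a) := by
      intro a b
      rcases le_total (key a) (key b) with h | h <;> simp [h]
    set l := 𝓖.toList.mergeSort (fun A B => decide (key A ≤ key B)) with hl
    have hperm : l.Perm 𝓖.toList := List.mergeSort_perm _ _
    have hnodup : l.Nodup := hperm.nodup_iff.2 (Finset.nodup_toList _)
    have hlen : l.length = 𝓖.card := by rw [hperm.length_eq, Finset.length_toList]
    have hmem' : ∀ A, A ∈ l ↔ A ∈ 𝓖 := fun A => by rw [hperm.mem_iff, Finset.mem_toList]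
    have hsorted : l.Pairwise (fun A B => key A ≤ key B) := by
      have h := List.pairwise_mergeSort (le := fun A B => decide (key A ≤ key B))
        htrans htotal 𝓖.toList
      refine h.imp ?_
      intro a b hab
      simpa using hab
    have hidx : ∀ i : Fin 𝓖.card, (i : ℕ) < l.length := fun i => by
      rw [hlen]; exact i.2
    have hsorted' : ∀ a b : ℕ, ∀ (ha : a < l.length) (hb : b < l.length), a ≤ b →
        key (l[a]'ha) ≤ key (l[b]'hb) := by
      intro a b ha hb hab
      rcases eq_or_lt_of_le hab with rfl | hlt
      · exact le_refl _
      · have := hsorted.rel_get_of_lt (a := ⟨a, ha⟩) (b := ⟨b, hb⟩) hlt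
        simpa [List.get_eq_getElem] using this
    refine ⟨fun i => l[(i : ℕ)]'(hidx i), ?_, ?_, ?_⟩
    · intro i j hij
      have h2 : (⟨(i : ℕ), hidx i⟩ : Fin l.length) = ⟨(j : ℕ), hidx j⟩ :=
        List.nodup_iff_injective_get.1 hnodup (by simpa [List.get_eq_getElem] using hij)
      exact Fin.ext (by simpa using congrArg Fin.val h2)
    · intro A
      constructor
      · intro hA
        obtain ⟨k, hk, hkA⟩ := List.mem_iff_getElem.1 ((hmem' A).2 hA)
        exact ⟨⟨k, by rw [← hlen]; exact hk⟩, hkA⟩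
      · rintro ⟨i, rfl⟩
        exact (hmem' _).1 (List.getElem_mem _)
    · set p : Finset (Fin n) → Bool := fun A => decide (last ∈ A) with hp
      refine ⟨(l.takeWhile p).length, ?_, ?_, ?_, ?_⟩
      · rw [← hlen]
        exact (List.takeWhile_sublist p).length_le
      · intro i hi
        have hpre : l.takeWhile p <+: l := List.takeWhile_prefix p
        have heq : (l.takeWhile p)[(i : ℕ)]'hi = l[(i : ℕ)]'(hidx i) := hpre.getElem hi
        have hmem2 : l[(i : ℕ)]'(hidx i) ∈ l.takeWhile p := by
          rw [← heq]; exact List.getElem_mem _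
        have := List.mem_takeWhile_imp hmem2
        simpa [hp] using this
      · intro i hi
        set r := (l.takeWhile p).length with hr
        have hrl : r < l.length := lt_of_le_of_lt hi (hidx i)
        have hsplit : l.takeWhile p ++ l.dropWhile p = l :=
          List.takeWhile_append_dropWhile (p := p) (l := l)
        have hd0 : 0 < (l.dropWhile p).length := by
          have h : (l.takeWhile p ++ l.dropWhile p).length = (l.takeWhile p).length + (l.dropWhile p).length := List.length_append
          rw [hsplit] at h
          omega
        have hgetr : l[r]'hrl = (l.dropWhile p)[0]'hd0 := by
          have h1 := List.getElem_of_eq hsplit.symm hrl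
          rw [h1, List.getElem_append_right (le_refl r)]
          simp [← hr]
        have hnp : ¬ (p (l[r]'hrl) = true) := by
          rw [hgetr]
          have := List.dropWhile_get_zero_not p l hd0
          simpa [List.get_eq_getElem] using this
        have hlast_r : last ∉ l[r]'hrl := by simpa [hp] using hnp
        have hGr : l[r]'hrl ∈ 𝓖 := (hmem' _).1 (List.getElem_mem _)
        have hkeyr : key (l[r]'hrl) = 2 * s + 1 := by
          rcases (hmem (l[r]'hrl)).1 hGr with ⟨h1, _⟩ | ⟨_, h2⟩
          · exact absurd h1 hlast_r
          · show 2 * (l[r]'hrl).card + (if last ∈ l[r]'hrl then 0 else 1) = 2 * s + 1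
            rw [if_neg hlast_r, h2]
        have hkle : key (l[r]'hrl) ≤ key (l[(i : ℕ)]'(hidx i)) :=
          hsorted' r i hrl (hidx i) hi
        intro hlast_i
        have hGi : l[(i : ℕ)]'(hidx i) ∈ 𝓖 := (hmem' _).1 (List.getElem_mem _)
        have hci : (l[(i : ℕ)]'(hidx i)).card ≤ s := hcard_le _ hGi
        have hk2 : key (l[(i : ℕ)]'(hidx i)) = 2 * (l[(i : ℕ)]'(hidx i)).card := by
          show 2 * (l[(i : ℕ)]'(hidx i)).card + (if last ∈ l[(i : ℕ)]'(hidx i) then 0 else 1)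
            = 2 * (l[(i : ℕ)]'(hidx i)).card
          rw [if_pos hlast_i]
          omega
        omega
      · intro i j hij
        have hkle : key (l[(i : ℕ)]'(hidx i)) ≤ key (l[(j : ℕ)]'(hidx j)) :=
          hsorted' i j (hidx i) (hidx j) hij
        show (l[(i : ℕ)]'(hidx i)).card ≤ (l[(j : ℕ)]'(hidx j)).card
        have h1 : key (l[(i : ℕ)]'(hidx i)) =
            2 * (l[(i : ℕ)]'(hidx i)).card + (if last ∈ l[(i : ℕ)]'(hidx i) then 0 else 1) := rfl
        have h2 : key (l[(j : ℕ)]'(hidx j)) =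
            2 * (l[(j : ℕ)]'(hidx j)).card + (if last ∈ l[(j : ℕ)]'(hidx j) then 0 else 1) := rfl
        rw [h1, h2] at hkle
        split_ifs at hkle <;> omega
  · -- counting
    have hcard_erase : (Finset.univ.erase last).card = n - 1 := by
      rw [Finset.card_erase_of_mem (Finset.mem_univ _), Finset.card_univ, Fintype.card_fin]
    have hbij : 𝓖.card =
        ((Finset.range (s + 1)).biUnion
          (fun i => Finset.powersetCard i (Finset.univ.erase last))).card := by
      refine Finset.card_bij (fun A _ => A.erase last) ?_ ?_ ?_
      · intro A hA
        rw [Finset.mem_biUnion]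
        refine ⟨(A.erase last).card, ?_, ?_⟩
        · rw [Finset.mem_range]
          rcases (hmem A).1 hA with ⟨h1, h2⟩ | ⟨h1, h2⟩
          · have := Finset.card_erase_of_mem h1
            have hpos : 0 < A.card := Finset.card_pos.2 ⟨last, h1⟩
            omega
          · rw [Finset.erase_eq_of_notMem h1, h2]; omega
        · exact Finset.mem_powersetCard.2
            ⟨Finset.erase_subset_erase _ (Finset.subset_univ A), rfl⟩
      · intro A hA B hB hAB
        rcases (hmem A).1 hA with ⟨h1, h2⟩ | ⟨h1, h2⟩ <;>
          rcases (hmem B).1 hB with ⟨h3, h4⟩ | ⟨h3, h4⟩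
        · rw [← Finset.insert_erase h1, ← Finset.insert_erase h3, hAB]
        · exfalso
          have e1 := Finset.card_erase_of_mem h1
          have e2 := Finset.erase_eq_of_notMem h3
          have hpos : 0 < A.card := Finset.card_pos.2 ⟨last, h1⟩
          have : (A.erase last).card = (B.erase last).card := by rw [hAB]
          rw [e1, e2] at this
          omega
        · exfalso
          have e1 := Finset.card_erase_of_mem h3
          have e2 := Finset.erase_eq_of_notMem h1
          have hpos : 0 < B.card := Finset.card_pos.2 ⟨last, h3⟩
          have : (A.erase last).card = (B.erase last).card := by rw [hAB]
          rw [e1, e2] at this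
          omega
        · rw [← Finset.erase_eq_of_notMem h1, ← Finset.erase_eq_of_notMem h3, hAB]
      · intro B hB
        rw [Finset.mem_biUnion] at hB
        obtain ⟨i, hi, hBp⟩ := hB
        rw [Finset.mem_range] at hi
        obtain ⟨hBsub, hBcard⟩ := Finset.mem_powersetCard.1 hBp
        have hlastB : last ∉ B := fun h => (Finset.mem_erase.1 (hBsub h)).1 rfl
        rcases eq_or_lt_of_le (show i ≤ s by omega) with heq | hlt
        · refine ⟨B, ?_, Finset.erase_eq_of_notMem hlastB⟩
          exact (hmem B).2 (Or.inr ⟨hlastB, by omega⟩)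
        · refine ⟨insert last B, ?_, ?_⟩
          · refine (hmem _).2 (Or.inl ⟨Finset.mem_insert_self _ _, ?_⟩)
            rw [Finset.card_insert_of_notMem hlastB]
            omega
          · exact Finset.erase_insert hlastB
    rw [hbij, Finset.card_biUnion]
    · refine Finset.sum_congr rfl fun i _ => ?_
      rw [Finset.card_powersetCard, hcard_erase]
    · intro i _ j _ hij
      exact Finset.pairwise_disjoint_powersetCard _ hij
end

section
/- Let L = {ℓ_1, ..., ℓ_s} be a set of non-negative integers, F_1, ..., F_m subsets of [n] with |F_1| ≤ ... ≤ |F_m| and |F_i ∩ F_j| ∈ L for i ≠ j. Let v_i ∈ {0,1}^n be the characteristic vector of F_i and define P_i(x) = ∏_{k : ℓ_k < |F_i|} (⟨x, v_i⟩ − ℓ_k). Then P_i(v_i) ≠ 0 for every i and P_i(v_j) = 0 whenever j < i. -/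
lemma inner_char (n : ℕ) (A B : Finset (Fin n)) :
    (∑ j, (if j ∈ A then (1:ℝ) else 0) * (if j ∈ B then 1 else 0)) = (A ∩ B).card := by
  have h : ∀ j, (if j ∈ A then (1:ℝ) else 0) * (if j ∈ B then 1 else 0)
      = if j ∈ A ∩ B then (1:ℝ) else 0 := fun j => by
    by_cases h1 : j ∈ A <;> by_cases h2 : j ∈ B <;> simp [h1, h2]
  simp [h, Finset.filter_mem_eq_inter, ← Finset.mem_inter]

/-- The polynomials `P i (x) = ∏_{k ∈ L, k < |F i|} (⟨x, v i⟩ − k)`, where `v i`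
is the characteristic vector of `F i`, satisfy `P i (v i) ≠ 0` and
`P i (v j) = 0` for `j < i`, provided `|F 1| ≤ … ≤ |F m|` and the family is
`L`-intersecting. -/
theorem snevily_polynomials (n m : ℕ) (L : Finset ℕ)
    (F : Fin m → Finset (Fin n)) (hinj : Function.Injective F)
    (hmono : ∀ i j : Fin m, i ≤ j → (F i).card ≤ (F j).card)
    (hint : ∀ i j : Fin m, i ≠ j → (F i ∩ F j).card ∈ L)
    (v : Fin m → Fin n → ℝ) (hv : ∀ i j, v i j = if j ∈ F i then 1 else 0)
    (P : Fin m → (Fin n → ℝ) → ℝ)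
    (hP : ∀ i x, P i x =
      ∏ k ∈ L.filter (fun k => k < (F i).card), ((∑ j, x j * v i j) - (k : ℝ))) :
    (∀ i : Fin m, P i (v i) ≠ 0) ∧ (∀ i j : Fin m, j < i → P i (v j) = 0) := by
  have key : ∀ a b : Fin m, (∑ j, v a j * v b j) = ((F a ∩ F b).card : ℝ) := by
    intro a b
    simp only [hv]
    exact inner_char n (F a) (F b)
  constructor
  · intro i
    rw [hP, key]
    refine Finset.prod_ne_zero_iff.2 ?_
    intro k hk
    rw [Finset.mem_filter] at hk
    have : (F i ∩ F i).card = (F i).card := by simp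
    rw [this]
    have := hk.2
    intro h
    have : (k : ℝ) = (F i).card := by linarith
    exact absurd (Nat.cast_injective this ▸ hk.2) (lt_irrefl _)
  · intro i j hji
    rw [hP, key]
    have hne : j ≠ i := ne_of_lt hji
    have hmem : (F j ∩ F i).card ∈ L := hint j i hne
    have hlt : (F j ∩ F i).card < (F i).card := by
      have h1 : (F j ∩ F i).card ≤ (F j).card := Finset.card_le_card Finset.inter_subset_left
      have h2 : (F j).card ≤ (F i).card := hmono j i (le_of_lt hji)
      rcases lt_or_eq_of_le (le_trans h1 h2) with h | h
      · exact h
      · exfalso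
        have e1 : (F j ∩ F i).card = (F j).card := le_antisymm h1 (h ▸ h2.trans (le_of_eq rfl) |> fun _ => by omega)
        have e2 : F j ∩ F i = F j := Finset.eq_of_subset_of_card_le Finset.inter_subset_left (le_of_eq e1.symm)
        have e3 : F j ⊆ F i := e2 ▸ Finset.inter_subset_right
        have e4 : F j = F i := Finset.eq_of_subset_of_card_le e3 (by omega)
        exact hne (hinj e4)
    refine Finset.prod_eq_zero (i := (F j ∩ F i).card)
      (Finset.mem_filter.2 ⟨hmem, hlt⟩) ?_
    simp
end

section
/- Let T_1, ..., T_N be an enumeration of all subsets of [n-1] of size at most s−1 with |T_1| ≤ ... ≤ |T_N| (so N = ∑_{i=0}^{s-1} C(n-1, i)). Define g_i(x) = (x_n − 1) · ∏_{j ∈ T_i} x_j ∈ ℝ[x_1, ..., x_n]. Then the polynomials g_1, ..., g_N, viewed as functions on {0,1}^n, are linearly independent over ℝ. -/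
/-- If `T 1, …, T N` enumerates all subsets of `[n-1]` of size at most `s-1`
in non-decreasing order of size (so `N = ∑_{i=0}^{s-1} C(n-1, i)`), then the
polynomials `g i (x) = (x_n − 1) · ∏_{j ∈ T i} x_j`, viewed as functions on
`{0,1}^n`, are linearly independent over `ℝ`.  The element `n` of `[n]` is
modelled by `⟨n-1, _⟩ : Fin n`, and `{0,1}^n` by `Fin n → Bool`. -/
theorem g_polynomials_linear_independent (n s N : ℕ) (hn : 0 < n)
    (hN : N = ∑ i ∈ Finset.range s, (n - 1).choose i)
    (last : Fin n) (hlast : last = ⟨n - 1, Nat.sub_lt hn one_pos⟩)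
    (T : Fin N → Finset (Fin n))
    (hTinj : Function.Injective T)
    (hTsub : ∀ i, last ∉ T i ∧ (T i).card ≤ s - 1)
    (hTall : ∀ A : Finset (Fin n), last ∉ A → A.card ≤ s - 1 → ∃ i, T i = A)
    (hTmono : ∀ i j : Fin N, i ≤ j → (T i).card ≤ (T j).card)
    (g : Fin N → (Fin n → Bool) → ℝ)
    (hg : ∀ i b, g i b =
      ((if b last then (1 : ℝ) else 0) - 1) * ∏ j ∈ T i, (if b j then (1 : ℝ) else 0)) :
    LinearIndependent ℝ g := by
  rw [Fintype.linearIndependent_iff]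
  intro c hc
  suffices H : ∀ m : ℕ, ∀ i : Fin N, (i : ℕ) = m → c i = 0 by
    exact fun i => H i i rfl
  intro m
  induction m using Nat.strong_induction_on with
  | _ m ih =>
  intro i hm
  subst hm
  set w : Fin n → Bool := fun j => decide (j ∈ T i) with hw
  have hgw : ∀ j : Fin N, g j w = if T j ⊆ T i then -1 else 0 := by
    intro j
    rw [hg]
    have hlastTi : last ∉ T i := (hTsub i).1
    have h1 : (if w last then (1:ℝ) else 0) = 0 := by simp [hw, hlastTi]
    rw [h1]
    have h2 : (∏ k ∈ T j, (if w k then (1:ℝ) else 0)) = if T j ⊆ T i then 1 else 0 := by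
      by_cases hsub : T j ⊆ T i
      · simp only [hsub, if_true]
        apply Finset.prod_eq_one
        intro k hk
        simp [hw, hsub hk]
      · simp only [hsub, if_false]
        obtain ⟨k, hk, hk'⟩ := Finset.not_subset.mp hsub
        apply Finset.prod_eq_zero hk
        simp [hw, hk']
    rw [h2]
    split <;> ring
  have hev := congrFun hc w
  simp only [Finset.sum_apply, Pi.smul_apply, smul_eq_mul, Pi.zero_apply] at hev
  have key : ∀ j : Fin N, T j ⊆ T i → j ≤ i := by
    intro j hsub
    by_contra hlt
    push_neg at hlt
    have hc1 : (T i).card ≤ (T j).card := hTmono i j hlt.le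
    have heq : T j = T i := Finset.eq_of_subset_of_card_le hsub hc1
    exact absurd (hTinj heq) (ne_of_gt hlt)
  have hterm : ∀ j : Fin N, c j * g j w = if j = i then -c i else 0 := by
    intro j
    rw [hgw j]
    by_cases hji : j = i
    · subst hji; simp
    · simp only [hji, if_false]
      by_cases hsub : T j ⊆ T i
      · have hle : j ≤ i := key j hsub
        have hlt : j < i := lt_of_le_of_ne hle hji
        rw [ih j.val (Fin.lt_def.mp hlt) j rfl]
        ring
      · simp [hsub]
  rw [Finset.sum_congr rfl (fun j _ => hterm j)] at hev
  simp only [Finset.sum_ite_eq', Finset.mem_univ, if_true] at hev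
  linarith
end
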